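/- For oriented knots K₁ and K₂, i_max(K₁ # K₂) = i_max(K₁ ⊔ K₂), where # denotes connected sum and ⊔ disjoint union. -/
import Mathlib


/-- `i_max(K₁ # K₂) = i_max(K₁ ⊔ K₂)` for knots `K₁`, `K₂`, via Khovanov's
long exact sequence relating the connected sum and the disjoint union. -/
theorem stmt_6
    (Knot Link : Type)
    (connSum disjUnion : Knot → Knot → Link)
    (KH : Link → ℤ → Type)        -- rational Khovanov homology
    [∀ L i, AddCommGroup (KH L i)] [∀ L i, Module ℚ (KH L i)]
    (imax : Link → ℤ)
    (himax_mem : ∀ L, Nontrivial (KH L (imax L)))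
    (himax_ub : ∀ L i, Nontrivial (KH L i) → i ≤ imax L)
    (K₁ K₂ : Knot)
    -- KH vanishes in sufficiently large degree
    (hvanish : ∃ N : ℤ, ∀ i ≥ N, ¬ Nontrivial (KH (connSum K₁ K₂) i))
    -- Khovanov's long exact sequence
    -- ⋯ → KH^i(#) → KH^i(⊔) → KH^i(#) → KH^{i+1}(#) → KH^{i+1}(⊔) → ⋯
    (α : ∀ i : ℤ, KH (connSum K₁ K₂) i →ₗ[ℚ] KH (disjUnion K₁ K₂) i)
    (β : ∀ i : ℤ, KH (disjUnion K₁ K₂) i →ₗ[ℚ] KH (connSum K₁ K₂) i)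
    (γ : ∀ i : ℤ, KH (connSum K₁ K₂) i →ₗ[ℚ] KH (connSum K₁ K₂) (i+1))
    (hαβ : ∀ i, Function.Exact (α i) (β i))
    (hβγ : ∀ i, Function.Exact (β i) (γ i))
    (hγα : ∀ i, Function.Exact (γ i) (α (i+1))) :
    imax (connSum K₁ K₂) = imax (disjUnion K₁ K₂) := by
  have htrivA : ∀ i, imax (connSum K₁ K₂) < i → Subsingleton (KH (connSum K₁ K₂) i) := by
    intro i hi
    by_contra h
    rw [not_subsingleton_iff_nontrivial] at h
    exact absurd (himax_ub _ i h) (by omega)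
  have htrivB : ∀ i, imax (disjUnion K₁ K₂) < i → Subsingleton (KH (disjUnion K₁ K₂) i) := by
    intro i hi
    by_contra h
    rw [not_subsingleton_iff_nontrivial] at h
    exact absurd (himax_ub _ i h) (by omega)
  have hBA : imax (disjUnion K₁ K₂) ≤ imax (connSum K₁ K₂) := by
    by_contra h
    push_neg at h
    have hs : Subsingleton (KH (connSum K₁ K₂) (imax (disjUnion K₁ K₂))) := htrivA _ h
    have : Subsingleton (KH (disjUnion K₁ K₂) (imax (disjUnion K₁ K₂))) := by
      constructor
      intro x y
      have hx : x ∈ Set.range (α (imax (disjUnion K₁ K₂))) := by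
        rw [← (hαβ (imax (disjUnion K₁ K₂))) x]
        exact Subsingleton.elim _ _
      have hy : y ∈ Set.range (α (imax (disjUnion K₁ K₂))) := by
        rw [← (hαβ (imax (disjUnion K₁ K₂))) y]
        exact Subsingleton.elim _ _
      obtain ⟨x', hx'⟩ := hx
      obtain ⟨y', hy'⟩ := hy
      rw [← hx', ← hy', Subsingleton.elim x' y']
    exact absurd (himax_mem (disjUnion K₁ K₂)) (not_nontrivial_iff_subsingleton.2 this)
  have hAB : imax (connSum K₁ K₂) ≤ imax (disjUnion K₁ K₂) := by
    by_contra h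
    push_neg at h
    have key : ∀ i, imax (connSum K₁ K₂) ≤ i → Nontrivial (KH (connSum K₁ K₂) i) := by
      refine Int.le_induction (himax_mem _) ?_
      intro i hi ih
      · have hsB : Subsingleton (KH (disjUnion K₁ K₂) i) := htrivB i (by omega)
        have hinj : Function.Injective (γ i) := by
          rw [← LinearMap.ker_eq_bot, LinearMap.ker_eq_bot']
          intro m hm
          have : m ∈ Set.range (β i) := (hβγ i m).1 hm
          obtain ⟨z, hz⟩ := this
          rw [← hz, Subsingleton.elim z 0, map_zero]
        obtain ⟨x, y, hxy⟩ := ih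
        exact ⟨γ i x, γ i y, fun hc => hxy (hinj hc)⟩
    obtain ⟨N, hN⟩ := hvanish
    exact hN (max N (imax (connSum K₁ K₂))) (le_max_left _ _) (key _ (le_max_right _ _))
  omega
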